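/- arXiv:2503.18259 — 4 statements merged into one kernel-verified Lean document; each statement's English description precedes it below -/
import Mathlib

section
/- Let α ∈ (0,1) and let (φ_n)_{n≥1} be the base kernel. There exist a constant C_R > 0 and s_0 ∈ (0,1] such that for all s ∈ (0, s_0), |φ̂(s) − (1 − s^α)| ≤ C_R · s. Consequently, for any δ ∈ (0, 1−α], |φ̂(s) − (1 − s^α)| ≤ C_R · s^{α+δ} for all s ∈ (0, s_0]. (Second-order Abelian bound for the chosen base kernel.) -/
/-!
Abel summation turns `φ̂(s)` into `e^{-s} - (1 - e^{-s}) T(s) / Γ(1-α)` with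
`T(s) = ∑_{n ≥ 1} n^{-α} e^{-sn}`. By the integral test for the decreasing function
`x ↦ x^{-α} e^{-sx}`, `T(s)` differs from `∫_0^∞ x^{-α} e^{-sx} dx = Γ(1-α) s^{α-1}` by at most
`1/(1-α)`. Substituting, `φ̂(s) - (1 - s^α)` splits into `e^{-s} - 1`,
`(e^{-s} - 1 + s) s^{α-1}` and `(1 - e^{-s})/Γ(1-α)` times that bounded error, each `O(s)`.
-/

open MeasureTheory Filter Set

/-- The base kernel `(φ_n)_{n ≥ 1}` (with `φ_0 := 0`). -/
noncomputable def baseKernel (α : ℝ) (n : ℕ) : ℝ :=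
  if n = 0 then 0
  else if n = 1 then 1 - 1 / Real.Gamma (1 - α)
  else (1 / Real.Gamma (1 - α)) * (((n : ℝ) - 1) ^ (-α) - (n : ℝ) ^ (-α))

/-- `φ̂(s) = Σ_{n ≥ 1} φ_n e^{-sn}`. -/
noncomputable def phiHat (α s : ℝ) : ℝ :=
  ∑' n : ℕ, baseKernel α n * Real.exp (-(s * n))

open Real

noncomputable def rpowExp (α s x : ℝ) : ℝ := x ^ (-α) * exp (-(s * x))

lemma rpowExp_nonneg (α s : ℝ) {x : ℝ} (hx : 0 ≤ x) : 0 ≤ rpowExp α s x :=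
  mul_nonneg (rpow_nonneg hx _) (exp_pos _).le

lemma rpowExp_one (α s : ℝ) : rpowExp α s 1 = exp (-s) := by
  simp [rpowExp]

section

variable {α s : ℝ}

lemma antitoneOn_rpowExp (hα : 0 ≤ α) (hs : 0 ≤ s) : AntitoneOn (rpowExp α s) (Ioi 0) :=
  fun x hx y _ hxy => mul_le_mul (rpow_le_rpow_of_nonpos hx hxy (by linarith))
    (exp_le_exp.mpr (by nlinarith)) (exp_pos _).le (rpow_nonneg hx.le _)

lemma integrableOn_rpowExp (hα : α < 1) (hs : 0 < s) : IntegrableOn (rpowExp α s) (Ioi 0) := by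
  refine (integrableOn_rpow_mul_exp_neg_mul_rpow (s := -α) (by linarith) one_pos hs).congr_fun
    (fun x _ => ?_) measurableSet_Ioi
  simp [rpowExp]

lemma integral_rpowExp (hα : α < 1) (hs : 0 < s) :
    ∫ x in Ioi 0, rpowExp α s x = Gamma (1 - α) * s ^ (α - 1) := by
  have h := integral_rpow_mul_exp_neg_mul_Ioi (a := 1 - α) (by linarith) hs
  rw [sub_sub_cancel_left, one_div, inv_rpow hs.le, ← rpow_neg hs.le, neg_sub] at h
  rw [mul_comm, ← h]
  rfl

lemma integral_Ioc_zero_one_rpowExp_le (hα : α < 1) (hs : 0 < s) :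
    ∫ x in Ioc 0 1, rpowExp α s x ≤ 1 / (1 - α) := by
  have hrpow : IntegrableOn (fun x : ℝ => x ^ (-α)) (Ioc 0 1) :=
    (intervalIntegrable_iff_integrableOn_Ioc_of_le zero_le_one).mp
      (intervalIntegral.intervalIntegrable_rpow' (by linarith))
  calc ∫ x in Ioc 0 1, rpowExp α s x ≤ ∫ x in Ioc 0 1, x ^ (-α) := by
        refine setIntegral_mono_on ((integrableOn_rpowExp hα hs).mono_set Ioc_subset_Ioi_self)
          hrpow measurableSet_Ioc fun x hx => ?_
        exact mul_le_of_le_one_right (rpow_nonneg hx.1.le _)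
          (exp_le_one_iff.mpr (by nlinarith [hx.1]))
    _ = 1 / (1 - α) := by
        rw [← intervalIntegral.integral_of_le zero_le_one, integral_rpow (Or.inl (by linarith)),
          one_rpow, zero_rpow (by linarith)]
        ring_nf

lemma summable_rpowExp_nat (hα : α ∈ Ioo 0 1) (hs : 0 < s) :
    Summable fun n : ℕ => rpowExp α s n :=
  AntitoneOn.summable_of_integrableOn_Ioi (N := 1)
    (by simpa using (antitoneOn_rpowExp hα.1.le hs.le).mono (Ici_subset_Ioi.mpr one_pos))
    (by simpa using (integrableOn_rpowExp hα.2 hs).mono_set (Ioi_subset_Ioi zero_le_one))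
    fun x hx => rpowExp_nonneg α s (by simp at hx; linarith)

lemma summable_rpowExp_nat_add_one (hα : α ∈ Ioo 0 1) (hs : 0 < s) :
    Summable fun n : ℕ => rpowExp α s (n + 1) := by
  exact_mod_cast (summable_nat_add_iff 1).mpr (summable_rpowExp_nat hα hs)

lemma abs_tsum_rpowExp_sub_le (hα : α ∈ Ioo 0 1) (hs : 0 < s) :
    |∑' n : ℕ, rpowExp α s (n + 1) - Gamma (1 - α) * s ^ (α - 1)| ≤ 1 / (1 - α) := by
  have anti : AntitoneOn (rpowExp α s) (Ici ((1 : ℕ) : ℝ)) := by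
    simpa using (antitoneOn_rpowExp hα.1.le hs.le).mono (Ici_subset_Ioi.mpr one_pos)
  have nonneg : ∀ x ∈ Ioi ((1 : ℕ) : ℝ), 0 ≤ rpowExp α s x :=
    fun x hx => rpowExp_nonneg α s (by simp at hx; linarith)
  have hint := integrableOn_rpowExp hα.2 hs
  have hint₁ : IntegrableOn (rpowExp α s) (Ioi ((1 : ℕ) : ℝ)) := by
    simpa using hint.mono_set (Ioi_subset_Ioi zero_le_one)
  have lower : ∫ x in Ioi 1, rpowExp α s x ≤ ∑' n : ℕ, rpowExp α s (n + 1) := by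
    exact_mod_cast anti.integral_le_tsum_comp_add 1 (summable_rpowExp_nat hα hs) nonneg
  have upper : ∑' n : ℕ, rpowExp α s (n + 1) ≤ exp (-s) + ∫ x in Ioi 1, rpowExp α s x := by
    have htail := anti.tsum_comp_add_le_integral 1 hint₁ nonneg
    rw [(summable_rpowExp_nat_add_one hα hs).tsum_eq_zero_add]
    push_cast at htail ⊢
    rw [zero_add, rpowExp_one]
    linarith
  have split : ∫ x in Ioi 0, rpowExp α s x
      = (∫ x in Ioc 0 1, rpowExp α s x) + ∫ x in Ioi 1, rpowExp α s x := by
    rw [← Ioc_union_Ioi_eq_Ioi zero_le_one, setIntegral_union (Ioc_disjoint_Ioi le_rfl)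
      measurableSet_Ioi (hint.mono_set Ioc_subset_Ioi_self)
      (hint.mono_set (Ioi_subset_Ioi zero_le_one))]
  have head_nonneg : 0 ≤ ∫ x in Ioc 0 1, rpowExp α s x :=
    setIntegral_nonneg measurableSet_Ioc fun x hx => rpowExp_nonneg α s hx.1.le
  have head_le := integral_Ioc_zero_one_rpowExp_le hα.2 hs
  have one_le : 1 ≤ 1 / (1 - α) := by
    rw [le_div_iff₀ (by linarith [hα.2])]; linarith [hα.1]
  have exp_le : exp (-s) ≤ 1 := exp_le_one_iff.mpr (by linarith)
  rw [← integral_rpowExp hα.2 hs, abs_le]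
  constructor <;> linarith

lemma phiHat_eq_exp_sub_mul_tsum (hT : Summable fun n : ℕ => rpowExp α s (n + 1)) :
    phiHat α s = exp (-s) - (1 - exp (-s)) / Gamma (1 - α) * ∑' n : ℕ, rpowExp α s (n + 1) := by
  set c := 1 / Gamma (1 - α)
  set F : ℕ → ℝ := fun n => baseKernel α n * exp (-(s * n))
  have hF : ∀ n : ℕ,
      F (n + 2) = c * (rpowExp α s (n + 1) * exp (-s) - rpowExp α s (n + 1 + 1)) := by
    intro n
    simp only [F, baseKernel, rpowExp, if_neg (show n + 2 ≠ 0 by omega),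
      if_neg (show n + 2 ≠ 1 by omega)]
    push_cast
    rw [show (n : ℝ) + 2 - 1 = n + 1 by ring, show (n : ℝ) + 1 + 1 = n + 2 by ring,
      show -(s * (n + 2)) = -(s * (n + 1)) + -s by ring, exp_add]
    ring
  have hT₂ : Summable fun n : ℕ => rpowExp α s (n + 1 + 1) := by
    exact_mod_cast (summable_nat_add_iff 1).mpr hT
  have hF_summable : Summable F := by
    refine (summable_nat_add_iff 2).mp ?_
    simp only [hF]
    exact ((hT.mul_right _).sub hT₂).mul_left c
  have hT_succ :
      ∑' n : ℕ, rpowExp α s (n + 1 + 1) = ∑' n : ℕ, rpowExp α s (n + 1) - exp (-s) := by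
    rw [hT.tsum_eq_zero_add]
    push_cast
    rw [zero_add, rpowExp_one]
    ring
  rw [phiHat, ← hF_summable.sum_add_tsum_nat_add 2, tsum_congr hF, tsum_mul_left,
    (hT.mul_right _).tsum_sub hT₂, tsum_mul_right, hT_succ]
  simp only [Finset.sum_range_succ, Finset.range_one, Finset.sum_singleton, F, c, baseKernel,
    ↓reduceIte, one_ne_zero, Nat.cast_one, mul_one, zero_mul, zero_add]
  ring

lemma abs_phiHat_sub_le (hα : α ∈ Ioo 0 1) (hs : 0 < s) (hs₁ : s ≤ 1) :
    |phiHat α s - (1 - s ^ α)| ≤ (2 + 1 / Gamma (1 - α) / (1 - α)) * s := by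
  have hΓ : 0 < Gamma (1 - α) := Gamma_pos_of_pos (by linarith [hα.2])
  set T := ∑' n : ℕ, rpowExp α s (n + 1)
  set E := T - Gamma (1 - α) * s ^ (α - 1)
  have hE : |E| ≤ 1 / (1 - α) := abs_tsum_rpowExp_sub_le hα hs
  have hsα : s * s ^ (α - 1) = s ^ α := by
    rw [rpow_sub_one hs.ne']; field_simp
  have decomp : phiHat α s - (1 - s ^ α) = (exp (-s) - 1)
      + (exp (-s) - 1 + s) * s ^ (α - 1) - (1 - exp (-s)) / Gamma (1 - α) * E := by
    rw [phiHat_eq_exp_sub_mul_tsum (summable_rpowExp_nat_add_one hα hs), ← hsα]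
    field_simp
    ring
  have h_exp₁ : 0 ≤ 1 - exp (-s) := by linarith [exp_le_one_iff.mpr (neg_nonpos.mpr hs.le)]
  have h_exp₂ : 1 - exp (-s) ≤ s := by linarith [add_one_le_exp (-s)]
  have h_exp₃ : |exp (-s) - 1 + s| ≤ s ^ 2 := by
    simpa using abs_exp_sub_one_sub_id_le (x := -s) (by rw [abs_neg, abs_of_pos hs]; exact hs₁)
  have h₁ : |exp (-s) - 1| ≤ s := by rw [abs_sub_comm, abs_of_nonneg h_exp₁]; exact h_exp₂
  have h₂ : |(exp (-s) - 1 + s) * s ^ (α - 1)| ≤ s := by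
    rw [abs_mul, abs_of_nonneg (rpow_nonneg hs.le _)]
    calc |exp (-s) - 1 + s| * s ^ (α - 1) ≤ s ^ 2 * s ^ (α - 1) := by gcongr
      _ = s * s ^ α := by rw [← hsα]; ring
      _ ≤ s * 1 := by gcongr; exact rpow_le_one hs.le hs₁ hα.1.le
      _ = s := mul_one s
  have h₃ : |(1 - exp (-s)) / Gamma (1 - α) * E| ≤ 1 / Gamma (1 - α) / (1 - α) * s := by
    rw [abs_mul, abs_div, abs_of_nonneg h_exp₁, abs_of_pos hΓ]
    calc (1 - exp (-s)) / Gamma (1 - α) * |E| ≤ s / Gamma (1 - α) * (1 / (1 - α)) := by gcongr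
      _ = 1 / Gamma (1 - α) / (1 - α) * s := by ring
  rw [decomp]
  calc _ ≤ |exp (-s) - 1| + |(exp (-s) - 1 + s) * s ^ (α - 1)|
        + |(1 - exp (-s)) / Gamma (1 - α) * E| :=
          (abs_sub _ _).trans (by gcongr; exact abs_add_le _ _)
    _ ≤ _ := by linarith

end

/-- Second-order Abelian bound: there are `C_R > 0` and `s₀ ∈ (0,1]` with
`|φ̂(s) - (1 - s^α)| ≤ C_R s` for `s ∈ (0, s₀)`, and consequently
`|φ̂(s) - (1 - s^α)| ≤ C_R s^{α+δ}` for any `δ ∈ (0, 1-α]` and `s ∈ (0, s₀]`. -/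
theorem phiHat_second_order_abelian (α : ℝ) (hα : α ∈ Set.Ioo (0 : ℝ) 1) :
    ∃ C : ℝ, 0 < C ∧ ∃ s₀ ∈ Set.Ioc (0 : ℝ) 1,
      (∀ s : ℝ, 0 < s → s < s₀ → |phiHat α s - (1 - s ^ α)| ≤ C * s) ∧
      (∀ δ ∈ Set.Ioc (0 : ℝ) (1 - α), ∀ s : ℝ, 0 < s → s ≤ s₀ →
        |phiHat α s - (1 - s ^ α)| ≤ C * s ^ (α + δ)) := by
  have h₁α : 0 < 1 - α := by linarith [hα.2]
  have hC : 0 < 2 + 1 / Gamma (1 - α) / (1 - α) := by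
    have := Gamma_pos_of_pos h₁α
    positivity
  refine ⟨_, hC, 1, ⟨one_pos, le_rfl⟩, fun s hs hs₁ => abs_phiHat_sub_le hα hs hs₁.le, ?_⟩
  intro δ hδ s hs hs₁
  calc _ ≤ _ * s := abs_phiHat_sub_le hα hs hs₁
    _ ≤ _ := by gcongr; exact self_le_rpow_of_le_one hs.le hs₁ (by linarith [hδ.2])
end

section
/- Let (φ_n)_{n≥1} be a nonnegative real sequence with Σ_{n≥1} φ_n = 1, let a ∈ (0,1), let τ ≥ 1 be an integer, and let ψ be the renewal kernel of φ with parameter a; set ψ_0 := 0 and define the step function ζ(t) := ((1−a)/a)·τ·ψ_{⌊tτ⌋} for t ≥ 0. Then for every z > 0, t ↦ e^{−zt} ζ(t) is integrable on (0,∞) and ∫_0^∞ e^{−zt} ζ(t) dt = (1−a) · (τ(1 − e^{−z/τ})/z) · G(e^{−z/τ})/(1 − a·G(e^{−z/τ})), where G(x) := Σ_{n≥1} φ_n x^n. -/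
/-!
Writing `x = e^{-z/τ}`, each `ψ_n x^n` is the sum over `k` of the nonnegative terms
`a^(k+1) (φ^{*(k+1)})_n x^n`. Summing over `n` first turns convolution powers into powers of
`G(x)` (Cauchy product), so `Σ_n ψ_n x^n = Σ_k (a G(x))^(k+1) = a G / (1 - a G)`.
The step function `t ↦ ψ_{⌊tτ⌋}` is constant on `[n/τ, (n+1)/τ)`, where `e^{-zt}` integrates to
`(1 - x) x^n / z`; hence the Laplace transform is `(1 - x) / z · Σ_n ψ_n x^n`, and integrability
follows from the same computation for `|ψ|`.
-/

open MeasureTheory Filter Set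

/-- Discrete convolution powers: `convPow f k` is `f^{*(k+1)}`. -/
noncomputable def convPow (f : ℕ → ℝ) : ℕ → ℕ → ℝ
  | 0 => f
  | (k + 1) => fun n => ∑ m ∈ Finset.Ico 1 n, convPow f k m * f (n - m)

/-- Renewal kernel of `f` with parameter `a`: `ψ_n = Σ_{k ≥ 1} a^k (f^{*k})_n`. -/
noncomputable def renewalKernel (f : ℕ → ℝ) (a : ℝ) (n : ℕ) : ℝ :=
  ∑' k : ℕ, a ^ (k + 1) * convPow f k n

/-- The rescaled step function `ζ(t) = ((1-a)/a)·τ·ψ_{⌊tτ⌋}`. -/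
noncomputable def stepKernel (f : ℕ → ℝ) (a : ℝ) (τ : ℕ) (t : ℝ) : ℝ :=
  ((1 - a) / a) * (τ : ℝ) * renewalKernel f a ⌊t * (τ : ℝ)⌋₊


namespace convPow

variable {f : ℕ → ℝ}

lemma apply_zero (hf : f 0 = 0) (k : ℕ) : convPow f k 0 = 0 := by
  cases k with
  | zero => exact hf
  | succ k => simp [convPow]

lemma nonneg (hf : ∀ n, 0 ≤ f n) (k n : ℕ) : 0 ≤ convPow f k n := by
  induction k generalizing n with
  | zero => exact hf n
  | succ k ih => exact Finset.sum_nonneg fun m _ => mul_nonneg (ih m) (hf _)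

/-- The boundary terms `m = 0` and `m = n` of the Cauchy product vanish since `f 0 = 0`. -/
lemma succ_eq_sum_range (hf : f 0 = 0) (k n : ℕ) :
    convPow f (k + 1) n = ∑ m ∈ Finset.range (n + 1), convPow f k m * f (n - m) := by
  rw [Finset.range_eq_Ico]
  refine Finset.sum_subset (Finset.Ico_subset_Ico (Nat.zero_le 1) n.le_succ) fun m hm hm' => ?_
  rcases Nat.eq_zero_or_pos m with rfl | hm0
  · rw [apply_zero hf, zero_mul]
  · obtain rfl : m = n := by simp only [Finset.mem_Ico] at hm hm'; omega
    rw [Nat.sub_self, hf, mul_zero]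

lemma mul_pow (x : ℝ) (k n : ℕ) :
    convPow (fun m => f m * x ^ m) k n = convPow f k n * x ^ n := by
  induction k generalizing n with
  | zero => rfl
  | succ k ih =>
    simp only [convPow, Finset.sum_mul]
    refine Finset.sum_congr rfl fun m hm => ?_
    have hmn : m + (n - m) = n := by simp only [Finset.mem_Ico] at hm; omega
    rw [ih, ← hmn, pow_add, Nat.add_sub_cancel_left]
    ring

lemma hasSum (hf : f 0 = 0) {S : ℝ} (hS : HasSum f S) (k : ℕ) :
    HasSum (convPow f k) (S ^ (k + 1)) := by
  induction k with
  | zero => simpa [convPow] using hS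
  | succ k ih =>
    have h := hasSum_sum_range_mul_of_summable_norm (f := convPow f k) (g := f)
      ih.summable.abs hS.summable.abs
    rw [ih.tsum_eq, hS.tsum_eq, ← pow_succ] at h
    simpa only [← succ_eq_sum_range hf] using h

end convPow

lemma hasSum_pow_succ_geometric {r : ℝ} (hr0 : 0 ≤ r) (hr1 : r < 1) :
    HasSum (fun k : ℕ => r ^ (k + 1)) (r / (1 - r)) := by
  simpa [pow_succ', div_eq_mul_inv] using (hasSum_geometric_of_lt_one hr0 hr1).mul_left r

lemma renewalKernel_nonneg {φ : ℕ → ℝ} (hφ : ∀ n, 0 ≤ φ n) {a : ℝ} (ha : 0 ≤ a) (n : ℕ) :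
    0 ≤ renewalKernel φ a n :=
  tsum_nonneg fun k => mul_nonneg (pow_nonneg ha _) (convPow.nonneg hφ k n)

theorem hasSum_renewalKernel_mul_pow {φ : ℕ → ℝ} (hφ0 : φ 0 = 0) (hφ : ∀ n, 0 ≤ φ n)
    {a x G : ℝ} (ha : 0 ≤ a) (hx : 0 ≤ x) (hG : HasSum (fun n => φ n * x ^ n) G)
    (haG : a * G < 1) :
    HasSum (fun n => renewalKernel φ a n * x ^ n) (a * G / (1 - a * G)) := by
  set F : ℕ × ℕ → ℝ := fun p => a ^ (p.1 + 1) * (convPow φ p.1 p.2 * x ^ p.2)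
  have hF0 : 0 ≤ F := fun p =>
    mul_nonneg (pow_nonneg ha _) (mul_nonneg (convPow.nonneg hφ _ _) (pow_nonneg hx _))
  have hFk (k : ℕ) : HasSum (fun n => F (k, n)) ((a * G) ^ (k + 1)) := by
    have h := convPow.hasSum (by simp [hφ0]) hG k
    rw [show convPow (fun n => φ n * x ^ n) k = fun n => convPow φ k n * x ^ n from
      funext (convPow.mul_pow x k)] at h
    simpa only [_root_.mul_pow] using h.mul_left (a ^ (k + 1))
  have hgeo := hasSum_pow_succ_geometric (mul_nonneg ha (hG.nonneg fun n =>
    mul_nonneg (hφ n) (pow_nonneg hx n))) haG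
  have hF : HasSum F (a * G / (1 - a * G)) := by
    have hFsum : Summable F := (summable_prod_of_nonneg hF0).mpr
      ⟨fun k => (hFk k).summable, by simpa only [(hFk _).tsum_eq] using hgeo.summable⟩
    rw [← (hFsum.hasSum.prod_fiberwise hFk).unique hgeo]
    exact hFsum.hasSum
  have hF' := (Equiv.prodComm ℕ ℕ).hasSum_iff.mpr hF
  refine hF'.prod_fiberwise fun n => (hF'.summable.prod_factor n).hasSum_iff.mpr ?_
  rw [renewalKernel, ← tsum_mul_right]
  exact tsum_congr fun k => (mul_assoc _ _ _).symm

section StepFunction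

open Real

variable {τ z : ℝ}

lemma mem_Ico_nat_div_iff_floor (hτ : 0 < τ) {t : ℝ} {n : ℕ} :
    t ∈ Ico (n / τ) ((n + 1) / τ) ↔ 0 ≤ t ∧ ⌊t * τ⌋₊ = n := by
  rw [mem_Ico, div_le_iff₀ hτ, lt_div_iff₀ hτ]
  constructor
  · rintro ⟨h1, h2⟩
    have ht : 0 ≤ t * τ := n.cast_nonneg.trans h1
    exact ⟨nonneg_of_mul_nonneg_left ht hτ, (Nat.floor_eq_iff ht).mpr ⟨h1, h2⟩⟩
  · rintro ⟨ht, rfl⟩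
    exact ⟨Nat.floor_le (by positivity), Nat.lt_floor_add_one _⟩

lemma iUnion_Ico_nat_div (hτ : 0 < τ) : ⋃ n : ℕ, Ico (n / τ) ((n + 1) / τ) = Ici 0 := by
  ext t
  simp [mem_Ico_nat_div_iff_floor hτ]

lemma pairwise_disjoint_Ico_nat_div (hτ : 0 < τ) :
    Pairwise (Function.onFun Disjoint fun n : ℕ => Ico (n / τ) ((n + 1) / τ)) := by
  refine fun m n hmn => Set.disjoint_left.mpr fun t hm hn => hmn ?_
  rw [mem_Ico_nat_div_iff_floor hτ] at hm hn
  exact hm.2.symm.trans hn.2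

lemma integral_Ico_exp_neg_mul (hz : z ≠ 0) {A B : ℝ} (hAB : A ≤ B) :
    ∫ t in Ico A B, exp (-(z * t)) = (exp (-(z * A)) - exp (-(z * B))) / z := by
  rw [setIntegral_congr_set Ico_ae_eq_Ioc, ← intervalIntegral.integral_of_le hAB]
  simp only [← neg_mul]
  rw [intervalIntegral.integral_comp_mul_left (fun t => exp t) (neg_ne_zero.mpr hz),
    integral_exp, smul_eq_mul, inv_neg, div_eq_inv_mul]
  simp only [neg_mul]
  ring

lemma exp_neg_mul_nat_div (n : ℕ) : exp (-(z * (n / τ))) = exp (-(z / τ)) ^ n := by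
  rw [← exp_nat_mul]
  ring_nf

lemma integrableOn_Ico_exp_neg_mul_floor (hτ : 0 < τ) (c : ℕ → ℝ) (n : ℕ) :
    IntegrableOn (fun t => exp (-(z * t)) * c ⌊t * τ⌋₊) (Ico (n / τ) ((n + 1) / τ)) := by
  have hc : IntegrableOn (fun t => exp (-(z * t)) * c n) (Icc (n / τ) ((n + 1) / τ)) :=
    Continuous.integrableOn_Icc (by fun_prop)
  refine (hc.mono_set Ico_subset_Icc_self).congr_fun (fun t ht => ?_) measurableSet_Ico
  rw [((mem_Ico_nat_div_iff_floor hτ).mp ht).2]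

lemma integral_Ico_exp_neg_mul_floor (hτ : 0 < τ) (hz : z ≠ 0) (c : ℕ → ℝ) (n : ℕ) :
    ∫ t in Ico (n / τ) ((n + 1) / τ), exp (-(z * t)) * c ⌊t * τ⌋₊ =
      (1 - exp (-(z / τ))) / z * (c n * exp (-(z / τ)) ^ n) := by
  have hle : (n : ℝ) / τ ≤ (n + 1) / τ := by gcongr; linarith
  rw [setIntegral_congr_fun measurableSet_Ico fun t ht => by
      rw [((mem_Ico_nat_div_iff_floor hτ).mp ht).2], integral_mul_const, integral_Ico_exp_neg_mul hz hle,
    exp_neg_mul_nat_div, show ((n : ℝ) + 1) = ((n + 1 : ℕ) : ℝ) by push_cast; ring,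
    exp_neg_mul_nat_div, pow_succ]
  ring

variable {c : ℕ → ℝ}

lemma integrableOn_Ici_exp_neg_mul_floor (hτ : 0 < τ) (hz : z ≠ 0)
    (hc : Summable fun n => |c n| * exp (-(z / τ)) ^ n) :
    IntegrableOn (fun t => exp (-(z * t)) * c ⌊t * τ⌋₊) (Ici 0) := by
  rw [← iUnion_Ico_nat_div hτ]
  refine integrableOn_iUnion_of_summable_integral_norm
    (integrableOn_Ico_exp_neg_mul_floor hτ c) ?_
  have hnorm (t : ℝ) : ‖exp (-(z * t)) * c ⌊t * τ⌋₊‖ = exp (-(z * t)) * |c ⌊t * τ⌋₊| := by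
    rw [Real.norm_eq_abs, abs_mul, abs_of_pos (exp_pos _)]
  simp only [hnorm, integral_Ico_exp_neg_mul_floor hτ hz (fun n => |c n|)]
  exact hc.mul_left _

theorem integrableOn_Ioi_exp_neg_mul_floor (hτ : 0 < τ) (hz : z ≠ 0)
    (hc : Summable fun n => |c n| * exp (-(z / τ)) ^ n) :
    IntegrableOn (fun t => exp (-(z * t)) * c ⌊t * τ⌋₊) (Ioi 0) :=
  (integrableOn_Ici_exp_neg_mul_floor hτ hz hc).mono_set Ioi_subset_Ici_self

theorem integral_Ioi_exp_neg_mul_floor (hτ : 0 < τ) (hz : z ≠ 0)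
    (hc : Summable fun n => |c n| * exp (-(z / τ)) ^ n) :
    ∫ t in Ioi 0, exp (-(z * t)) * c ⌊t * τ⌋₊ =
      (1 - exp (-(z / τ))) / z * ∑' n, c n * exp (-(z / τ)) ^ n := by
  rw [← integral_Ici_eq_integral_Ioi, ← iUnion_Ico_nat_div hτ,
    integral_iUnion (fun _ => measurableSet_Ico) (pairwise_disjoint_Ico_nat_div hτ)
      ((iUnion_Ico_nat_div hτ).symm ▸ integrableOn_Ici_exp_neg_mul_floor hτ hz hc)]
  simp only [integral_Ico_exp_neg_mul_floor hτ hz c, tsum_mul_left]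

end StepFunction

/-- Laplace transform of the rescaled renewal step function:
`∫_0^∞ e^{-zt} ζ(t) dt = (1-a)·(τ(1-e^{-z/τ})/z)·G(e^{-z/τ})/(1 - a G(e^{-z/τ}))`. -/
theorem stepKernel_laplace (φ : ℕ → ℝ) (hφ0 : φ 0 = 0) (hφnn : ∀ n, 0 ≤ φ n)
    (hsum : HasSum φ 1) (a : ℝ) (ha : a ∈ Set.Ioo (0 : ℝ) 1)
    (τ : ℕ) (hτ : 1 ≤ τ) (z : ℝ) (hz : 0 < z) :
    IntegrableOn (fun t => Real.exp (-(z * t)) * stepKernel φ a τ t) (Set.Ioi 0) ∧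
    ∫ t in Set.Ioi (0 : ℝ), Real.exp (-(z * t)) * stepKernel φ a τ t =
      (1 - a) * ((τ : ℝ) * (1 - Real.exp (-(z / (τ : ℝ)))) / z) *
        ((∑' n : ℕ, φ n * Real.exp (-(z / (τ : ℝ))) ^ n) /
          (1 - a * ∑' n : ℕ, φ n * Real.exp (-(z / (τ : ℝ))) ^ n)) := by
  obtain ⟨ha0, ha1⟩ := ha
  have hτ0 : (0 : ℝ) < τ := by exact_mod_cast hτ
  set x := Real.exp (-(z / τ))
  have hx0 : 0 ≤ x := (Real.exp_pos _).le
  have hx1 : x ≤ 1 := Real.exp_le_one_iff.mpr (neg_nonpos.mpr (div_pos hz hτ0).le)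
  have hφx (n : ℕ) : φ n * x ^ n ≤ φ n := mul_le_of_le_one_right (hφnn n) (pow_le_one₀ hx0 hx1)
  set G := ∑' n, φ n * x ^ n
  have hG : HasSum (fun n => φ n * x ^ n) G :=
    (hsum.summable.of_nonneg_of_le (fun n => mul_nonneg (hφnn n) (pow_nonneg hx0 n)) hφx).hasSum
  have haG : a * G < 1 := by nlinarith [hasSum_le hφx hG hsum]
  have hψ := hasSum_renewalKernel_mul_pow hφ0 hφnn ha0.le hx0 hG haG
  set C := (1 - a) / a * τ
  have hC : 0 ≤ C := by positivity
  have hc : HasSum (fun n => C * renewalKernel φ a n * x ^ n) (C * (a * G / (1 - a * G))) := by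
    simpa only [mul_assoc] using hψ.mul_left C
  have hc_abs : Summable fun n => |C * renewalKernel φ a n| * x ^ n := by
    simpa only [abs_of_nonneg (mul_nonneg hC (renewalKernel_nonneg hφnn ha0.le _))]
      using hc.summable
  -- `stepKernel φ a τ t` unfolds to `C * ψ ⌊t * τ⌋₊`, a step function as in the lemmas above.
  refine ⟨integrableOn_Ioi_exp_neg_mul_floor hτ0 hz.ne' hc_abs, ?_⟩
  refine (integral_Ioi_exp_neg_mul_floor hτ0 hz.ne' hc_abs).trans ?_
  have haG' : 1 - a * G ≠ 0 := by linarith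
  rw [hc.tsum_eq]
  simp only [C, x]
  field_simp
end

section
/- Let α ∈ (0,1) and γ > 0. For every t > 0 the function u ↦ f_{α,γ}(u) is integrable on (0,t) and ∫_0^t f_{α,γ}(u) du = 1 − E_α(−γ t^α). -/
open MeasureTheory Filter Set

/-- Two-parameter Mittag-Leffler function `E_{α,β}(z) = Σ_{k≥0} z^k/Γ(αk+β)`. -/
noncomputable def mittagLeffler (α β z : ℝ) : ℝ :=
  ∑' k : ℕ, z ^ k / Real.Gamma (α * k + β)

/-- The Mittag-Leffler density `f_{α,γ}(t) = γ t^{α-1} E_{α,α}(-γ t^α)`. -/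
noncomputable def mlKernel (α γ t : ℝ) : ℝ :=
  γ * t ^ (α - 1) * mittagLeffler α α (-γ * t ^ α)

/-!
Expanding `E_{α,α}` gives `f_{α,γ}(u) = Σ_k γ (-γ)^k u^{α(k+1)-1} / Γ(α(k+1))`. Integrating term by
term and using `Γ(α(k+1)+1) = α(k+1) Γ(α(k+1))` turns this into
`-Σ_{k≥1} (-γ t^α)^k / Γ(αk+1) = 1 - E_α(-γ t^α)`. Each term has constant sign on `(0, t)`, so the
integrals of the absolute values are the absolute values of the terms of a Mittag-Leffler series;
these series converge by the ratio test, since log-convexity of `Γ` gives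
`Γ(s+α) ≥ (s-1)^α Γ(s)`. Integrability of `f_{α,γ}` itself comes from `|f_{α,γ}(u)| ≤ C u^{α-1}`,
as `E_{α,α}` is continuous and hence bounded on compact sets.
-/

open Real Topology

theorem rpow_sub_one_mul_Gamma_le_Gamma_add {s α : ℝ} (hs : 1 < s) (hα : 0 < α) :
    (s - 1) ^ α * Gamma s ≤ Gamma (s + α) := by
  have hs1 : 0 < s - 1 := by linarith
  have hslope := convexOn_log_Gamma.slope_mono_adjacent (x := s - 1) (y := s) (z := s + α)
    hs1 (by simp only [mem_Ioi]; linarith) (by linarith) (by linarith)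
  have hrec : Gamma s = (s - 1) * Gamma (s - 1) := by
    simpa using Gamma_add_one hs1.ne'
  have hlog : log (Gamma s) - log (Gamma (s - 1)) = log (s - 1) := by
    rw [hrec, log_mul hs1.ne' (Gamma_pos_of_pos hs1).ne']
    ring
  simp only [Function.comp_apply, sub_sub_cancel, div_one, add_sub_cancel_left, hlog,
    le_div_iff₀ hα] at hslope
  calc (s - 1) ^ α * Gamma s = exp (log (s - 1) * α + log (Gamma s)) := by
        rw [exp_add, exp_log (Gamma_pos_of_pos (by linarith)), rpow_def_of_pos hs1]
    _ ≤ exp (log (Gamma (s + α))) := exp_le_exp.2 (by linarith)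
    _ = Gamma (s + α) := exp_log (Gamma_pos_of_pos (by linarith))

theorem summable_mittagLeffler_series {α β : ℝ} (hα : 0 < α) (hβ : 0 < β) (z : ℝ) :
    Summable fun k : ℕ ↦ z ^ k / Gamma (α * k + β) := by
  have hs : Tendsto (fun k : ℕ ↦ α * k + β - 1) atTop atTop :=
    tendsto_atTop_add_const_right _ _
      (tendsto_atTop_add_const_right _ _ (tendsto_natCast_atTop_atTop.const_mul_atTop hα))
  have hratio : Tendsto (fun k : ℕ ↦ |z| / (α * k + β - 1) ^ α) atTop (𝓝 0) :=
    tendsto_const_nhds.div_atTop ((tendsto_rpow_atTop hα).comp hs)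
  refine summable_of_ratio_norm_eventually_le (r := 1 / 2) (by norm_num) ?_
  filter_upwards [hratio.eventually (ge_mem_nhds one_half_pos), hs.eventually_gt_atTop 0]
    with k hk hk1
  set s := α * k + β
  have hΓ := rpow_sub_one_mul_Gamma_le_Gamma_add (s := s) (by linarith) hα
  have hΓs : 0 < Gamma s := Gamma_pos_of_pos (by linarith)
  have hΓsα : 0 < Gamma (s + α) := Gamma_pos_of_pos (by linarith)
  push_cast
  rw [show α * (k + 1) + β = s + α by ring, norm_div, norm_div, norm_pow, norm_pow,
    norm_of_nonneg hΓs.le, norm_of_nonneg hΓsα.le, Real.norm_eq_abs]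
  calc |z| ^ (k + 1) / Gamma (s + α) ≤ |z| ^ (k + 1) / ((s - 1) ^ α * Gamma s) := by gcongr
    _ = |z| / (s - 1) ^ α * (|z| ^ k / Gamma s) := by rw [pow_succ]; field_simp
    _ ≤ 1 / 2 * (|z| ^ k / Gamma s) := by gcongr

theorem continuous_mittagLeffler {α β : ℝ} (hα : 0 < α) (hβ : 0 < β) :
    Continuous (mittagLeffler α β) := by
  have hΓ (k : ℕ) : 0 < Gamma (α * k + β) := Gamma_pos_of_pos (by positivity)
  refine continuous_iff_continuousAt.2 fun z ↦ ?_
  set R := |z| + 1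
  have hR : ContinuousOn (mittagLeffler α β) (Icc (-R) R) := by
    refine continuousOn_tsum (fun k ↦ by fun_prop) (summable_mittagLeffler_series hα hβ R)
      fun k x hx ↦ ?_
    rw [norm_div, norm_pow, norm_of_nonneg (hΓ k).le]
    gcongr
    exact abs_le.2 hx
  exact hR.continuousAt (Icc_mem_nhds (by linarith [neg_abs_le z]) (by linarith [le_abs_self z]))

theorem hasSum_mittagLeffler {α β : ℝ} (hα : 0 < α) (hβ : 0 < β) (z : ℝ) :
    HasSum (fun k : ℕ ↦ z ^ k / Gamma (α * k + β)) (mittagLeffler α β z) :=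
  (summable_mittagLeffler_series hα hβ z).hasSum

theorem hasSum_one_sub_mittagLeffler_one {α : ℝ} (hα : 0 < α) (z : ℝ) :
    HasSum (fun k : ℕ ↦ -(z ^ (k + 1) / Gamma (α * (k + 1 : ℕ) + 1)))
      (1 - mittagLeffler α 1 z) := by
  simpa using ((hasSum_nat_add_iff' 1).2 (hasSum_mittagLeffler hα one_pos z)).neg

theorem integrableOn_Ioo_rpow {p : ℝ} (hp : -1 < p) (t : ℝ) :
    IntegrableOn (fun u : ℝ ↦ u ^ p) (Ioo 0 t) :=
  (intervalIntegral.intervalIntegrable_rpow' hp).def'.mono_set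
    (Ioo_subset_Ioc_self.trans Ioc_subset_uIoc)

theorem integral_Ioo_rpow {p t : ℝ} (hp : -1 < p) (ht : 0 ≤ t) :
    ∫ u in Ioo 0 t, u ^ p = t ^ (p + 1) / (p + 1) := by
  rw [← integral_Ioc_eq_integral_Ioo, ← intervalIntegral.integral_of_le ht,
    integral_rpow (Or.inl hp), zero_rpow (by linarith), sub_zero]

theorem integral_Ioo_norm_const_mul_rpow {p t : ℝ} (c : ℝ) (hp : -1 < p) (ht : 0 ≤ t) :
    ∫ u in Ioo 0 t, ‖c * u ^ p‖ = ‖∫ u in Ioo 0 t, c * u ^ p‖ := by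
  have hpos (u : ℝ) (hu : u ∈ Ioo 0 t) : ‖c * u ^ p‖ = ‖c‖ * u ^ p := by
    rw [norm_mul, norm_of_nonneg (rpow_pos_of_pos hu.1 p).le]
  rw [setIntegral_congr_fun measurableSet_Ioo hpos, integral_const_mul, integral_const_mul,
    integral_Ioo_rpow hp ht, norm_mul, norm_of_nonneg (div_nonneg (rpow_nonneg ht _) (by linarith))]

theorem hasSum_mlKernel {α : ℝ} (hα : 0 < α) (γ : ℝ) {u : ℝ} (hu : 0 < u) :
    HasSum (fun k : ℕ ↦ γ * (-γ) ^ k / Gamma (α * k + α) * u ^ (α * k + α - 1))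
      (mlKernel α γ u) := by
  have hterm (k : ℕ) : γ * u ^ (α - 1) * ((-γ * u ^ α) ^ k / Gamma (α * k + α)) =
      γ * (-γ) ^ k / Gamma (α * k + α) * u ^ (α * k + α - 1) := by
    rw [mul_pow, ← rpow_natCast (u ^ α), ← rpow_mul hu.le,
      show α * k + α - 1 = α - 1 + α * k by ring, rpow_add hu, mul_comm α]
    ring
  rw [mlKernel]
  simpa only [hterm] using (hasSum_mittagLeffler hα hα (-γ * u ^ α)).mul_left (γ * u ^ (α - 1))

theorem continuousOn_mlKernel {α : ℝ} (hα : 0 < α) (γ : ℝ) :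
    ContinuousOn (mlKernel α γ) (Ioi 0) := by
  have hE := continuous_mittagLeffler hα hα
  intro u hu
  have hu0 : u ≠ 0 := ne_of_gt hu
  unfold mlKernel
  exact ContinuousAt.continuousWithinAt (by fun_prop (disch := exact Or.inl hu0))

theorem integrableOn_mlKernel {α : ℝ} (hα : 0 < α) (γ t : ℝ) :
    IntegrableOn (mlKernel α γ) (Ioo 0 t) := by
  obtain ⟨C, hC⟩ := (isCompact_Icc (a := -(|γ| * |t| ^ α)) (b := |γ| * |t| ^ α))
    |>.exists_bound_of_continuousOn (continuous_mittagLeffler hα hα).continuousOn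
  have hmeas : AEStronglyMeasurable (mlKernel α γ) (volume.restrict (Ioo 0 t)) :=
    ((continuousOn_mlKernel hα γ).mono Ioo_subset_Ioi_self).aestronglyMeasurable measurableSet_Ioo
  refine ((integrableOn_Ioo_rpow (by linarith : -1 < α - 1) t).const_mul (|γ| * C)).mono'
    hmeas ?_
  refine (ae_restrict_mem measurableSet_Ioo).mono fun u hu ↦ ?_
  have hz : -γ * u ^ α ∈ Icc (-(|γ| * |t| ^ α)) (|γ| * |t| ^ α) := by
    refine abs_le.1 ?_
    rw [abs_mul, abs_neg, abs_of_pos (rpow_pos_of_pos hu.1 α)]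
    gcongr
    · exact hu.1.le
    exact hu.2.le.trans (le_abs_self t)
  rw [mlKernel, norm_mul, norm_mul, norm_of_nonneg (rpow_pos_of_pos hu.1 _).le, Real.norm_eq_abs]
  calc |γ| * u ^ (α - 1) * ‖mittagLeffler α α (-γ * u ^ α)‖ ≤ |γ| * u ^ (α - 1) * C := by
        gcongr
        · exact mul_nonneg (abs_nonneg γ) (rpow_pos_of_pos hu.1 _).le
        exact hC _ hz
    _ = |γ| * C * u ^ (α - 1) := by ring

theorem integral_mlKernel_term {α : ℝ} (hα : 0 < α) (γ : ℝ) {t : ℝ} (ht : 0 ≤ t) (k : ℕ) :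
    ∫ u in Ioo 0 t, γ * (-γ) ^ k / Gamma (α * k + α) * u ^ (α * k + α - 1) =
      -((-γ * t ^ α) ^ (k + 1) / Gamma (α * (k + 1 : ℕ) + 1)) := by
  have hpos : 0 < α * k + α := by positivity
  rw [integral_const_mul, integral_Ioo_rpow (by linarith) ht, sub_add_cancel,
    show α * (k + 1 : ℕ) + 1 = α * k + α + 1 by push_cast; ring, Gamma_add_one hpos.ne',
    show α * k + α = α * (k + 1 : ℕ) by push_cast; ring, rpow_mul_natCast ht]
  have := (Gamma_pos_of_pos hpos).ne'
  field_simp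
  ring

theorem hasSum_integral_mlKernel {α : ℝ} (hα : 0 < α) (γ : ℝ) {t : ℝ} (ht : 0 ≤ t) :
    HasSum (fun k : ℕ ↦ -((-γ * t ^ α) ^ (k + 1) / Gamma (α * (k + 1 : ℕ) + 1)))
      (∫ u in Ioo 0 t, mlKernel α γ u) := by
  have hp (k : ℕ) : -1 < α * k + α - 1 := by
    have : 0 ≤ α * k := by positivity
    linarith
  have hint (k : ℕ) : IntegrableOn
      (fun u ↦ γ * (-γ) ^ k / Gamma (α * k + α) * u ^ (α * k + α - 1)) (Ioo 0 t) :=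
    (integrableOn_Ioo_rpow (hp k) t).const_mul _
  have hsum : Summable fun k : ℕ ↦
      ∫ u in Ioo 0 t, ‖γ * (-γ) ^ k / Gamma (α * k + α) * u ^ (α * k + α - 1)‖ := by
    refine ((summable_nat_add_iff 1).2
      (summable_mittagLeffler_series hα one_pos (-γ * t ^ α)).abs).congr fun k ↦ ?_
    rw [integral_Ioo_norm_const_mul_rpow _ (hp k) ht, integral_mlKernel_term hα γ ht, norm_neg,
      Real.norm_eq_abs]
  have h := hasSum_integral_of_summable_integral_norm hint hsum
  simp only [integral_mlKernel_term hα γ ht] at h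
  rwa [setIntegral_congr_fun measurableSet_Ioo fun u hu ↦ (hasSum_mlKernel hα γ hu.1).tsum_eq] at h

theorem mlKernel_integral_general (α γ : ℝ) (hα : α ∈ Set.Ioo (0 : ℝ) 1)
    (t : ℝ) (ht : 0 < t) :
    IntegrableOn (mlKernel α γ) (Set.Ioo 0 t) ∧
    ∫ u in Set.Ioo (0 : ℝ) t, mlKernel α γ u = 1 - mittagLeffler α 1 (-γ * t ^ α) :=
  ⟨integrableOn_mlKernel hα.1 γ t,
    (hasSum_integral_mlKernel hα.1 γ ht.le).unique (hasSum_one_sub_mittagLeffler_one hα.1 _)⟩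

/-- Cumulative Mittag-Leffler kernel: `∫_0^t f_{α,γ}(u) du = 1 - E_α(-γ t^α)`. -/
theorem mlKernel_integral (α γ : ℝ) (hα : α ∈ Set.Ioo (0 : ℝ) 1) (hγ : 0 < γ)
    (t : ℝ) (ht : 0 < t) :
    IntegrableOn (mlKernel α γ) (Set.Ioo 0 t) ∧
    ∫ u in Set.Ioo (0 : ℝ) t, mlKernel α γ u = 1 - mittagLeffler α 1 (-γ * t ^ α) :=
  mlKernel_integral_general α γ hα t ht
end

section
/- For every real number y, the function u ↦ e^{(1/2 + iu)y}/(1/4 + u²) is integrable on ℝ and (1/(2π)) ∫_ℝ e^{(1/2 + iu)y}/(1/4 + u²) du = min(1, e^y). -/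
/-!
Since `e^{(1/2+iu)y} = e^{y/2} e^{iuy}`, everything reduces to the Fourier pair
`e^{-b|x|} ↔ 2b/(b² + (2πξ)²)`, obtained by integrating exponentials over the two half-lines.
The transform is integrable, so Fourier inversion at `y` gives
`∫ e^{iuy}/(b² + u²) du = (π/b) e^{-b|y|}`; for `b = 1/2` the claim becomes
`e^{y/2} e^{-|y|/2} = e^{min(0, y)} = min(1, e^y)`.
-/

open MeasureTheory Set Complex Real
open scoped FourierTransform

section TwoSidedExponential

variable {b : ℝ} (ξ : ℝ)

lemma exp_mul_I_mul_exp_neg_mul_abs_of_nonneg {x : ℝ} (hx : 0 ≤ x) :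
    cexp (ξ * x * I) * (rexp (-b * |x|) : ℂ) = cexp ((ξ * I - b) * x) := by
  rw [abs_of_nonneg hx, ofReal_exp, ← Complex.exp_add]
  push_cast
  ring_nf

lemma exp_mul_I_mul_exp_neg_mul_abs_of_nonpos {x : ℝ} (hx : x ≤ 0) :
    cexp (ξ * x * I) * (rexp (-b * |x|) : ℂ) = cexp ((ξ * I + b) * x) := by
  rw [abs_of_nonpos hx, ofReal_exp, ← Complex.exp_add]
  push_cast
  ring_nf

lemma integrable_exp_mul_I_mul_exp_neg_mul_abs (hb : 0 < b) :
    Integrable fun x : ℝ => cexp (ξ * x * I) * (rexp (-b * |x|) : ℂ) := by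
  rw [← integrableOn_univ, ← Iic_union_Ioi (a := 0)]
  refine IntegrableOn.union ?_ ?_
  · exact (integrableOn_exp_mul_complex_Iic (by simpa) 0).congr_fun
      (fun x hx => (exp_mul_I_mul_exp_neg_mul_abs_of_nonpos ξ hx).symm) measurableSet_Iic
  · exact (integrableOn_exp_mul_complex_Ioi (by simpa) 0).congr_fun
      (fun x hx => (exp_mul_I_mul_exp_neg_mul_abs_of_nonneg ξ hx.le).symm)
      measurableSet_Ioi

lemma integral_exp_mul_I_mul_exp_neg_mul_abs (hb : 0 < b) :
    ∫ x : ℝ, cexp (ξ * x * I) * (rexp (-b * |x|) : ℂ) = ((2 * b / (b ^ 2 + ξ ^ 2) : ℝ) : ℂ) := by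
  have hint := integrable_exp_mul_I_mul_exp_neg_mul_abs ξ hb
  rw [← intervalIntegral.integral_Iic_add_Ioi hint.integrableOn hint.integrableOn,
    setIntegral_congr_fun measurableSet_Iic
      (fun x hx => exp_mul_I_mul_exp_neg_mul_abs_of_nonpos ξ hx),
    setIntegral_congr_fun measurableSet_Ioi
      (fun x hx => exp_mul_I_mul_exp_neg_mul_abs_of_nonneg ξ hx.le),
    integral_exp_mul_complex_Iic (by simpa), integral_exp_mul_complex_Ioi (by simpa)]
  have h₁ : (ξ * I + b : ℂ) ≠ 0 := fun h => by simpa [hb.ne'] using congrArg re h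
  have h₂ : (ξ * I - b : ℂ) ≠ 0 := fun h => by simpa [hb.ne'] using congrArg re h
  have hd : (b ^ 2 + ξ ^ 2 : ℂ) ≠ 0 := by exact_mod_cast (by positivity : b ^ 2 + ξ ^ 2 ≠ 0)
  simp only [ofReal_zero, mul_zero, Complex.exp_zero]
  push_cast
  field_simp
  ring_nf
  rw [I_sq]
  ring

lemma fourier_exp_neg_mul_abs (hb : 0 < b) (w : ℝ) :
    𝓕 (fun x : ℝ => (rexp (-b * |x|) : ℂ)) w = ((2 * b / (b ^ 2 + (2 * π * w) ^ 2) : ℝ) : ℂ) := by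
  rw [Real.fourier_real_eq_integral_exp_smul, show (2 * π * w) ^ 2 = (-2 * π * w) ^ 2 by ring,
    ← integral_exp_mul_I_mul_exp_neg_mul_abs _ hb]
  congr 1 with x
  rw [smul_eq_mul]
  push_cast
  ring_nf

end TwoSidedExponential

lemma integrable_inv_sq_add_sq {b : ℝ} (hb : b ≠ 0) :
    Integrable fun u : ℝ => (b ^ 2 + u ^ 2)⁻¹ := by
  refine (integrable_inv_one_add_sq.comp_div hb).const_mul (b ^ 2)⁻¹ |>.congr
    (Filter.Eventually.of_forall fun u => ?_)
  field_simp

lemma integrable_exp_mul_I_div_sq_add_sq {b : ℝ} (hb : b ≠ 0) (y : ℝ) :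
    Integrable fun u : ℝ => cexp (u * y * I) / ((b ^ 2 + u ^ 2 : ℝ) : ℂ) := by
  simp_rw [div_eq_mul_inv, ← ofReal_inv]
  refine (integrable_inv_sq_add_sq hb).ofReal.bdd_mul (c := 1) (by fun_prop)
    (Filter.Eventually.of_forall fun u => ?_)
  rw [← ofReal_mul, norm_exp_ofReal_mul_I]

lemma integral_exp_mul_I_div_sq_add_sq {b : ℝ} (hb : 0 < b) (y : ℝ) :
    ∫ u : ℝ, cexp (u * y * I) / ((b ^ 2 + u ^ 2 : ℝ) : ℂ) = ((π / b * rexp (-b * |y|) : ℝ) : ℂ) := by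
  set f : ℝ → ℂ := fun x => (rexp (-b * |x|) : ℂ)
  set g : ℝ → ℂ := fun u => cexp (u * y * I) / ((b ^ 2 + u ^ 2 : ℝ) : ℂ)
  have hf : Integrable f := by
    simpa [f] using integrable_exp_mul_I_mul_exp_neg_mul_abs 0 hb
  have hFf : 𝓕 f = fun w => ((2 * b * (b ^ 2 + (2 * π * w) ^ 2)⁻¹ : ℝ) : ℂ) := by
    ext w
    rw [fourier_exp_neg_mul_abs hb, div_eq_mul_inv]
  have hFf_int : Integrable (𝓕 f) := by
    rw [hFf]
    exact (((integrable_inv_sq_add_sq hb.ne').comp_mul_left' (by positivity)).const_mul _).ofReal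
  have inversion := hf.fourierInv_fourier_eq hFf_int (v := y) (by fun_prop)
  have hscale : 𝓕⁻ (𝓕 f) y = (2 * b : ℂ) * ∫ v : ℝ, g (2 * π * v) := by
    rw [Real.fourierInv_eq', hFf, ← integral_const_mul]
    congr 1 with v
    simp only [g, smul_eq_mul, Real.inner_apply]
    push_cast
    ring_nf
  rw [hscale, Measure.integral_comp_mul_left, abs_of_pos (by positivity)] at inversion
  have hb' : (b : ℂ) ≠ 0 := ofReal_ne_zero.mpr hb.ne'
  rw [Complex.real_smul] at inversion
  simp only [f] at inversion
  push_cast at inversion ⊢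
  field_simp at inversion ⊢
  linear_combination inversion

lemma exp_half_mul_exp_neg_half_abs (y : ℝ) :
    rexp (y / 2) * rexp (-(1 / 2) * |y|) = min 1 (rexp y) := by
  rw [← Real.exp_add]
  rcases le_total y 0 with hy | hy
  · rw [abs_of_nonpos hy, min_eq_right (Real.exp_le_one_iff.mpr hy)]
    congr 1
    ring
  · rw [abs_of_nonneg hy, min_eq_left (Real.one_le_exp_iff.mpr hy), Real.exp_eq_one_iff]
    ring

/-- For every real `y`, `u ↦ e^{(1/2+iu)y}/(1/4+u²)` is integrable on `ℝ` and
`(1/(2π)) ∫_ℝ e^{(1/2+iu)y}/(1/4+u²) du = min(1, e^y)`. -/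
theorem fourier_min_identity (y : ℝ) :
    Integrable (fun u : ℝ =>
      Complex.exp (((1 / 2 : ℂ) + (u : ℂ) * Complex.I) * (y : ℂ)) / ((1 / 4 + u ^ 2 : ℝ) : ℂ)) ∧
    (1 / (2 * (Real.pi : ℂ))) *
        ∫ u : ℝ, Complex.exp (((1 / 2 : ℂ) + (u : ℂ) * Complex.I) * (y : ℂ)) /
          ((1 / 4 + u ^ 2 : ℝ) : ℂ)
      = ((min 1 (Real.exp y) : ℝ) : ℂ) := by
  have hfactor : (fun u : ℝ =>
        cexp (((1 / 2 : ℂ) + (u : ℂ) * I) * (y : ℂ)) / ((1 / 4 + u ^ 2 : ℝ) : ℂ)) =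
      fun u : ℝ => (rexp (y / 2) : ℂ) * (cexp (u * y * I) / (((1 / 2) ^ 2 + u ^ 2 : ℝ) : ℂ)) := by
    ext u
    rw [ofReal_exp, mul_div_assoc', ← Complex.exp_add]
    push_cast
    ring_nf
  rw [hfactor, integral_const_mul, integral_exp_mul_I_div_sq_add_sq (by norm_num),
    ← exp_half_mul_exp_neg_half_abs]
  refine ⟨(integrable_exp_mul_I_div_sq_add_sq (by norm_num) y).const_mul _, ?_⟩
  have hπ : (π : ℂ) ≠ 0 := ofReal_ne_zero.mpr pi_ne_zero
  push_cast
  field_simp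
end
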